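/- arXiv:1603.04245 — 2 statements merged into one kernel-verified Lean document; each statement's English description precedes it below -/
import Mathlib

section
/- Let E be a real inner product space, p ≥ 2 an integer, ε > 0, M > 0, and 0 < C ≤ M^{p−1} / p^p. Let f, h : E → ℝ be differentiable with f convex and h 1-uniformly convex of order p. Let x, y, z : ℕ → E satisfy z 0 = x 0 and, for all k ≥ 0: x(k+1) = (p/(k+p)) • z k + (k/(k+p)) • y k; ∇h(z(k+1)) = ∇h(z k) − (ε C p (k+1)^{(p−1)}) • ∇f(y(k+1)); and ⟨∇f(y k), x k − y k⟩ ≥ M ε^{1/(p−1)} ‖∇f(y k)‖^{p/(p−1)}. Define the estimate function ψ_k(w) = C p Σ_{i=0}^{k} i^{(p−1)} [f(y i) + ⟨∇f(y i), w − y i⟩] + (1/ε) D_h(w, x 0). Then for all k ≥ 0: ψ_k(z k) ≥ C k^{(p)} f(y k). -/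
/-!
Write `A k = C k^{(p)}` and `a k = C p k^{(p-1)}`, so that `A (k+1) = A k + a (k+1)` and
`x (k+1)` is the `(a (k+1), A k)`-weighted average of `z k` and `y k`. Summing the mirror steps
gives `∇h (z k) = ∇h (x 0) - ε Σ_{i ≤ k} a i ∇f (y i)`, so by the three-point identity
`ψ_k w = ψ_k (z k) + D_h(w, z k) / ε`, and uniform convexity makes `ψ_k (z (k+1))` exceed
`ψ_k (z k)` by at least `‖z (k+1) - z k‖^p / (ε p)`. In the induction step, convexity of `f` at
`y (k+1)` and the averaging identity leave only the cross term
`a (k+1) ⟪∇f (y (k+1)), z (k+1) - z k⟫`, which Young's inequality with exponents `p` and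
`p/(p-1)` bounds by this gain plus the lower bound on `⟪∇f (y (k+1)), x (k+1) - y (k+1)⟫`;
`C ≤ M^{p-1} / p^p` is what makes the constants match.
-/

open Real
open scoped RealInnerProductSpace

/-- The rising factorial `k^{(q)} = k (k+1) ⋯ (k+q−1)`. -/
def risingFactorial (k q : ℕ) : ℕ := ∏ i ∈ Finset.range q, (k + i)

theorem risingFactorial_eq_ascFactorial (k q : ℕ) : risingFactorial k q = k.ascFactorial q :=
  (Nat.ascFactorial_eq_prod_range k q).symm

theorem risingFactorial_zero_left {q : ℕ} (hq : q ≠ 0) : risingFactorial 0 q = 0 := by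
  obtain ⟨q, rfl⟩ := Nat.exists_eq_add_one_of_ne_zero hq
  rw [risingFactorial_eq_ascFactorial, Nat.zero_ascFactorial]

theorem risingFactorial_eq_mul_succ {q : ℕ} (hq : q ≠ 0) (k : ℕ) :
    risingFactorial k q = k * risingFactorial (k + 1) (q - 1) := by
  obtain ⟨q, rfl⟩ := Nat.exists_eq_add_one_of_ne_zero hq
  simp only [risingFactorial_eq_ascFactorial, Nat.add_sub_cancel, Nat.succ_ascFactorial,
    Nat.ascFactorial_succ]

theorem risingFactorial_succ_eq_mul {q : ℕ} (hq : q ≠ 0) (k : ℕ) :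
    risingFactorial (k + 1) q = (k + q) * risingFactorial (k + 1) (q - 1) := by
  obtain ⟨q, rfl⟩ := Nat.exists_eq_add_one_of_ne_zero hq
  simp only [risingFactorial_eq_ascFactorial, Nat.add_sub_cancel, Nat.ascFactorial_succ]
  ring

theorem risingFactorial_succ_le_pow (k q : ℕ) : risingFactorial (k + 1) q ≤ (k + q) ^ q := by
  rw [risingFactorial_eq_ascFactorial]
  exact Nat.ascFactorial_le_pow_add k q

-- Young's inequality for `r / ε^{1/p}` and `ε^{1/p} a s` with exponents `p` and `p/(p-1)`.
theorem young_inequality_scaled {p ε a s r : ℝ} (hp : 1 < p) (hε : 0 < ε) (ha : 0 ≤ a)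
    (hs : 0 ≤ s) (hr : 0 ≤ r) :
    a * s * r ≤ r ^ p / (ε * p) +
      (p - 1) / p * a ^ (p / (p - 1)) * (ε ^ (1 / (p - 1)) * s ^ (p / (p - 1))) := by
  have hp0 : 0 < p := by linarith
  have hp1 : 0 < p - 1 := by linarith
  set e := ε ^ (1 / p)
  have he : 0 < e := rpow_pos_of_pos hε _
  have hep : e ^ p = ε := by rw [← rpow_mul hε.le, one_div_mul_cancel hp0.ne', rpow_one]
  have heq : e ^ (p / (p - 1)) = ε ^ (1 / (p - 1)) := by
    rw [← rpow_mul hε.le]; congr 1; field_simp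
  have hyoung := young_inequality_of_nonneg (div_nonneg hr he.le) (by positivity : 0 ≤ e * a * s)
    ((holderConjugate_iff_eq_conjExponent hp).mpr rfl)
  calc a * s * r = r / e * (e * a * s) := by field_simp
    _ ≤ _ := hyoung
    _ = _ := by
      rw [div_rpow hr he.le, hep, mul_rpow (by positivity) hs, mul_rpow he.le ha, heq]
      field_simp

theorem sub_one_div_mul_rpow_le_of_pow_le {p : ℕ} (hp : 2 ≤ p) {a b : ℝ} (ha : 0 ≤ a)
    (hb : 0 ≤ b) (hab : ((p : ℝ) - 1) ^ (p - 1) * a ^ p ≤ (p : ℝ) ^ (p - 1) * b ^ (p - 1)) :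
    ((p : ℝ) - 1) / p * a ^ ((p : ℝ) / ((p : ℝ) - 1)) ≤ b := by
  have hp1 : (1 : ℝ) < p := by exact_mod_cast hp
  have hcast : ((p - 1 : ℕ) : ℝ) = (p : ℝ) - 1 := by
    push_cast [Nat.cast_sub (by omega : 1 ≤ p)]
    ring
  refine le_of_pow_le_pow_left₀ (n := p - 1) (by omega) hb ?_
  have hpow : (a ^ ((p : ℝ) / ((p : ℝ) - 1))) ^ (p - 1) = a ^ p := by
    rw [← rpow_natCast, ← rpow_mul ha, hcast, div_mul_cancel₀ _ (by linarith), rpow_natCast]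
  rw [mul_pow, div_pow, hpow, div_mul_eq_mul_div, div_le_iff₀ (by positivity), mul_comm (b ^ _)]
  exact hab

theorem mul_mul_le_pow_div_add_mul {p : ℕ} (hp : 2 ≤ p) {ε M a A s r t : ℝ} (hε : 0 < ε)
    (hM : 0 ≤ M) (ha : 0 ≤ a) (hA : 0 ≤ A) (hs : 0 ≤ s) (hr : 0 ≤ r)
    (hw : ((p : ℝ) - 1) ^ (p - 1) * a ^ p ≤ (p : ℝ) ^ (p - 1) * (M * A) ^ (p - 1))
    (ht : M * ε ^ (1 / ((p : ℝ) - 1)) * s ^ ((p : ℝ) / ((p : ℝ) - 1)) ≤ t) :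
    a * s * r ≤ r ^ p / (ε * p) + A * t := by
  have hcoef := sub_one_div_mul_rpow_le_of_pow_le hp ha (mul_nonneg hM hA) hw
  have hyoung := young_inequality_scaled (by exact_mod_cast hp : (1 : ℝ) < p) hε ha hs hr
  rw [rpow_natCast] at hyoung
  refine hyoung.trans (add_le_add le_rfl ?_)
  calc _ ≤ M * A * (ε ^ (1 / ((p : ℝ) - 1)) * s ^ ((p : ℝ) / ((p : ℝ) - 1))) := by gcongr
    _ = A * (M * ε ^ (1 / ((p : ℝ) - 1)) * s ^ ((p : ℝ) / ((p : ℝ) - 1))) := by ring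
    _ ≤ A * t := by gcongr

section EstimateFunction

variable {E : Type*} [NormedAddCommGroup E] [InnerProductSpace ℝ E] [CompleteSpace E]

noncomputable def bregmanDiv (h : E → ℝ) (w x : E) : ℝ := h w - h x - ⟪gradient h x, w - x⟫

theorem bregmanDiv_three_point (h : E → ℝ) (x z w : E) :
    bregmanDiv h w x =
      bregmanDiv h z x + bregmanDiv h w z + ⟪gradient h z - gradient h x, w - z⟫ := by
  have hsplit : w - x = (w - z) + (z - x) := by abel
  simp only [bregmanDiv, hsplit, inner_add_right, inner_sub_left]
  ring

-- The paper's `ψ_k`, with arbitrary weights `a i` in place of `C p i^{(p-1)}`.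
noncomputable def estimateFunction (f h : E → ℝ) (ε : ℝ) (a : ℕ → ℝ) (x₀ : E) (y : ℕ → E)
    (k : ℕ) (w : E) : ℝ :=
  ∑ i ∈ Finset.range (k + 1), a i * (f (y i) + ⟪gradient f (y i), w - y i⟫) +
    1 / ε * bregmanDiv h w x₀

variable {f h : E → ℝ} {ε : ℝ} {a : ℕ → ℝ} {x₀ : E} {y z : ℕ → E}

theorem estimateFunction_succ (k : ℕ) (w : E) :
    estimateFunction f h ε a x₀ y (k + 1) w = estimateFunction f h ε a x₀ y k w +
      a (k + 1) * (f (y (k + 1)) + ⟪gradient f (y (k + 1)), w - y (k + 1)⟫) := by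
  simp only [estimateFunction, Finset.sum_range_succ _ (k + 1)]
  ring

theorem gradient_eq_sub_sum (hz0 : z 0 = x₀) (ha0 : a 0 = 0)
    (hz : ∀ k, gradient h (z (k + 1)) =
      gradient h (z k) - (ε * a (k + 1)) • gradient f (y (k + 1)))
    (k : ℕ) :
    gradient h (z k) = gradient h x₀ - ε • ∑ i ∈ Finset.range (k + 1), a i • gradient f (y i) := by
  induction k with
  | zero => simp [hz0, ha0]
  | succ k ih =>
    rw [hz k, ih, Finset.sum_range_succ _ (k + 1), smul_add, smul_smul]
    abel

theorem estimateFunction_eq_add_bregmanDiv (hε : ε ≠ 0) {k : ℕ} {u : E}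
    (hu : gradient h u =
      gradient h x₀ - ε • ∑ i ∈ Finset.range (k + 1), a i • gradient f (y i))
    (w : E) :
    estimateFunction f h ε a x₀ y k w =
      estimateFunction f h ε a x₀ y k u + 1 / ε * bregmanDiv h w u := by
  set g := ∑ i ∈ Finset.range (k + 1), a i • gradient f (y i)
  have hlin : ∑ i ∈ Finset.range (k + 1), a i * (f (y i) + ⟪gradient f (y i), w - y i⟫) =
      ∑ i ∈ Finset.range (k + 1), a i * (f (y i) + ⟪gradient f (y i), u - y i⟫) +
        ⟪g, w - u⟫ := by
    have hsplit : ∀ i, w - y i = (w - u) + (u - y i) := fun i => by abel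
    simp only [g, sum_inner, inner_smul_left, hsplit, inner_add_right, ← Finset.sum_add_distrib]
    refine Finset.sum_congr rfl fun i _ => ?_
    simp only [conj_trivial]
    ring
  have hgrad : ⟪gradient h u - gradient h x₀, w - u⟫ = -ε * ⟪g, w - u⟫ := by
    rw [hu, sub_sub_cancel_left, inner_neg_left, inner_smul_left, conj_trivial, neg_mul]
  simp only [estimateFunction, hlin, bregmanDiv_three_point h x₀ u w, hgrad]
  field_simp
  ring

theorem estimateFunction_succ_lower_bound {p : ℕ} (hp : 2 ≤ p) {M : ℝ} (hε : 0 < ε) (hM : 0 ≤ M)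
    (hfconv : ∀ u v : E, f u + ⟪gradient f u, v - u⟫ ≤ f v)
    (hhuc : ∀ u v : E, 1 / (p : ℝ) * ‖v - u‖ ^ p ≤ bregmanDiv h v u)
    {A : ℕ → ℝ} {x : ℕ → E} {k : ℕ}
    (hψ : ∀ w, estimateFunction f h ε a x₀ y k w =
      estimateFunction f h ε a x₀ y k (z k) + 1 / ε * bregmanDiv h w (z k))
    (hA : A (k + 1) = A k + a (k + 1)) (hAk : 0 ≤ A k) (ha : 0 ≤ a (k + 1))
    (hx : A (k + 1) • x (k + 1) = a (k + 1) • z k + A k • y k)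
    (hy : M * ε ^ (1 / ((p : ℝ) - 1)) * ‖gradient f (y (k + 1))‖ ^ ((p : ℝ) / ((p : ℝ) - 1)) ≤
      ⟪gradient f (y (k + 1)), x (k + 1) - y (k + 1)⟫)
    (hw : ((p : ℝ) - 1) ^ (p - 1) * a (k + 1) ^ p ≤ (p : ℝ) ^ (p - 1) * (M * A (k + 1)) ^ (p - 1))
    (ih : A k * f (y k) ≤ estimateFunction f h ε a x₀ y k (z k)) :
    A (k + 1) * f (y (k + 1)) ≤ estimateFunction f h ε a x₀ y (k + 1) (z (k + 1)) := by
  set g := gradient f (y (k + 1))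
  set r := ‖z (k + 1) - z k‖
  set s := ‖g‖
  have hA' : 0 ≤ A (k + 1) := by linarith
  have hprox : estimateFunction f h ε a x₀ y k (z k) + r ^ p / (ε * p) ≤
      estimateFunction f h ε a x₀ y k (z (k + 1)) := by
    have hr : r ^ p / (ε * p) = 1 / ε * (1 / (p : ℝ) * r ^ p) := by ring
    rw [hψ (z (k + 1)), hr]
    gcongr
    exact hhuc _ _
  have hconv : A k * (f (y (k + 1)) + ⟪g, y k - y (k + 1)⟫) ≤ A k * f (y k) :=
    mul_le_mul_of_nonneg_left (hfconv _ _) hAk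
  have hcomb : A k * (f (y (k + 1)) + ⟪g, y k - y (k + 1)⟫) +
      a (k + 1) * (f (y (k + 1)) + ⟪g, z (k + 1) - y (k + 1)⟫) =
      A (k + 1) * (f (y (k + 1)) + ⟪g, x (k + 1) - y (k + 1)⟫) +
        a (k + 1) * ⟪g, z (k + 1) - z k⟫ := by
    have hxg : A (k + 1) * ⟪g, x (k + 1)⟫ = a (k + 1) * ⟪g, z k⟫ + A k * ⟪g, y k⟫ := by
      rw [← inner_smul_right, hx, inner_add_right, inner_smul_right, inner_smul_right]
    simp only [inner_sub_right]
    linear_combination (⟪g, y (k + 1)⟫ - f (y (k + 1))) * hA - hxg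
  have hcs : -(a (k + 1) * s * r) ≤ a (k + 1) * ⟪g, z (k + 1) - z k⟫ := by
    rw [neg_le, ← mul_neg, mul_assoc]
    exact mul_le_mul_of_nonneg_left (neg_le.mp (neg_le_of_abs_le (abs_real_inner_le_norm _ _))) ha
  have hyoung : a (k + 1) * s * r ≤ r ^ p / (ε * p) + A (k + 1) * ⟪g, x (k + 1) - y (k + 1)⟫ :=
    mul_mul_le_pow_div_add_mul hp hε hM ha hA' (norm_nonneg _) (norm_nonneg _) hw hy
  rw [estimateFunction_succ]
  linarith

theorem mul_le_estimateFunction {p : ℕ} (hp : 2 ≤ p) {M : ℝ} (hε : 0 < ε) (hM : 0 ≤ M)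
    (hfconv : ∀ u v : E, f u + ⟪gradient f u, v - u⟫ ≤ f v)
    (hhuc : ∀ u v : E, 1 / (p : ℝ) * ‖v - u‖ ^ p ≤ bregmanDiv h v u)
    {A : ℕ → ℝ} {x : ℕ → E} (hz0 : z 0 = x 0) (ha0 : a 0 = 0) (hA0 : A 0 = 0)
    (ha : ∀ k, 0 ≤ a k) (hA : ∀ k, A (k + 1) = A k + a (k + 1))
    (hx : ∀ k, A (k + 1) • x (k + 1) = a (k + 1) • z k + A k • y k)
    (hz : ∀ k, gradient h (z (k + 1)) =
      gradient h (z k) - (ε * a (k + 1)) • gradient f (y (k + 1)))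
    (hy : ∀ k, M * ε ^ (1 / ((p : ℝ) - 1)) *
        ‖gradient f (y (k + 1))‖ ^ ((p : ℝ) / ((p : ℝ) - 1)) ≤
      ⟪gradient f (y (k + 1)), x (k + 1) - y (k + 1)⟫)
    (hw : ∀ k, ((p : ℝ) - 1) ^ (p - 1) * a (k + 1) ^ p ≤
      (p : ℝ) ^ (p - 1) * (M * A (k + 1)) ^ (p - 1))
    (k : ℕ) :
    A k * f (y k) ≤ estimateFunction f h ε a (x 0) y k (z k) := by
  have hA_nonneg : ∀ k, 0 ≤ A k := fun k => by
    induction k with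
    | zero => exact hA0.ge
    | succ k ih => rw [hA k]; linarith [ha (k + 1)]
  induction k with
  | zero => simp [estimateFunction, hz0, ha0, hA0, bregmanDiv]
  | succ k ih =>
    exact estimateFunction_succ_lower_bound hp hε hM hfconv hhuc
      (estimateFunction_eq_add_bregmanDiv hε.ne' (gradient_eq_sub_sum hz0 ha0 hz k))
      (hA k) (hA_nonneg k) (ha (k + 1)) (hx k) (hy k) (hw k) ih

end EstimateFunction

-- Hypothesis `hw` of `mul_le_estimateFunction` for the weights `a (k+1) = C p R` and
-- `A (k+1) = C (k+p) R`, where `R = (k+1)^{(p-1)} ≤ (k+p)^{p-1}`.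
theorem rateMatching_weight_le {p : ℕ} (hp : 1 ≤ p) {C M n R : ℝ} (hC : 0 ≤ C) (hR : 0 ≤ R)
    (hRn : R ≤ n ^ (p - 1)) (hCM : C * (p : ℝ) ^ p ≤ M ^ (p - 1)) :
    ((p : ℝ) - 1) ^ (p - 1) * (C * p * R) ^ p ≤
      (p : ℝ) ^ (p - 1) * (M * (C * (n * R))) ^ (p - 1) := by
  obtain ⟨q, rfl⟩ : ∃ q, p = q + 1 := ⟨p - 1, by omega⟩
  simp only [Nat.add_sub_cancel] at hRn hCM ⊢
  push_cast at hCM ⊢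
  rw [add_sub_cancel_right]
  have hn : 0 ≤ n ^ q := hR.trans hRn
  calc (q : ℝ) ^ q * (C * (q + 1) * R) ^ (q + 1)
      = (C * (q + 1) * R) ^ q * (q ^ q * C * (q + 1) * R) := by ring
    _ ≤ (C * (q + 1) * R) ^ q * ((q + 1) ^ q * C * (q + 1) * n ^ q) := by
        gcongr
        linarith
    _ = (C * (q + 1) * R) ^ q * (C * (q + 1) ^ (q + 1) * n ^ q) := by ring
    _ ≤ (C * (q + 1) * R) ^ q * (M ^ q * n ^ q) := by gcongr
    _ = ((q : ℝ) + 1) ^ q * (M * (C * (n * R))) ^ q := by simp only [mul_pow]; ring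

theorem estimate_function_lower_bound_general
    {E : Type*} [NormedAddCommGroup E] [InnerProductSpace ℝ E] [CompleteSpace E]
    (p : ℕ) (hp : 2 ≤ p) (ε M C : ℝ) (hε : 0 < ε) (hM : 0 < M)
    (hC : 0 < C) (hC' : C ≤ M ^ (p - 1) / (p : ℝ) ^ p)
    (f h : E → ℝ)
    (hfconv : ∀ a b : E, f a + ⟪gradient f a, b - a⟫ ≤ f b)
    (hhuc : ∀ a b : E, (1 / (p : ℝ)) * ‖b - a‖ ^ p ≤
      h b - h a - ⟪gradient h a, b - a⟫)
    (x y z : ℕ → E) (hz0 : z 0 = x 0)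
    (hx : ∀ k : ℕ, x (k + 1) =
      ((p : ℝ) / ((k : ℝ) + (p : ℝ))) • z k + ((k : ℝ) / ((k : ℝ) + (p : ℝ))) • y k)
    (hz : ∀ k : ℕ, gradient h (z (k + 1)) = gradient h (z k)
      - (ε * C * (p : ℝ) * (risingFactorial (k + 1) (p - 1) : ℝ)) • gradient f (y (k + 1)))
    (hy : ∀ k : ℕ, M * ε ^ (1 / ((p : ℝ) - 1)) *
        ‖gradient f (y k)‖ ^ ((p : ℝ) / ((p : ℝ) - 1))
      ≤ ⟪gradient f (y k), x k - y k⟫) :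
    ∀ k : ℕ, C * (risingFactorial k p : ℝ) * f (y k) ≤
      C * (p : ℝ) * (∑ i ∈ Finset.range (k + 1), (risingFactorial i (p - 1) : ℝ) *
          (f (y i) + ⟪gradient f (y i), z k - y i⟫))
        + (1 / ε) * (h (z k) - h (x 0) - ⟪gradient h (x 0), z k - x 0⟫) := by
  have hp0 : p ≠ 0 := by omega
  have hA : ∀ k, (risingFactorial k p : ℝ) = k * risingFactorial (k + 1) (p - 1) := fun k => by
    exact_mod_cast risingFactorial_eq_mul_succ hp0 k
  have hA_succ : ∀ k, (risingFactorial (k + 1) p : ℝ) =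
      (k + p) * risingFactorial (k + 1) (p - 1) := fun k => by
    exact_mod_cast risingFactorial_succ_eq_mul hp0 k
  have hR : ∀ k, (risingFactorial (k + 1) (p - 1) : ℝ) ≤ (k + p) ^ (p - 1) := fun k => by
    exact_mod_cast (risingFactorial_succ_le_pow k (p - 1)).trans (Nat.pow_le_pow_left (by omega) _)
  intro k
  have key := mul_le_estimateFunction (a := fun i => C * p * risingFactorial i (p - 1))
    (A := fun k => C * risingFactorial k p) hp hε hM.le hfconv hhuc hz0
    (by simp [risingFactorial_zero_left (show p - 1 ≠ 0 by omega)])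
    (by simp [risingFactorial_zero_left hp0])
    (fun k => by positivity)
    (fun k => by simp only [hA_succ, hA k]; ring)
    (fun k => by
      simp only [hx k, smul_add, smul_smul, hA_succ, hA k]
      congr 2 <;> field_simp)
    (fun k => by rw [hz k]; simp only [mul_assoc])
    (fun k => hy (k + 1))
    (fun k => by
      simp only [hA_succ]
      exact rateMatching_weight_le (by omega) hC.le (by positivity) (hR k)
        ((le_div_iff₀ (by positivity)).mp hC'))
    k
  convert key using 1
  simp only [estimateFunction, bregmanDiv, Finset.mul_sum, mul_assoc]

/-- The estimate-function lemma (Lemma 1 in the proof of Theorem 3):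
for the rate-matching discretization, the estimate function
`ψ_k(w) = C p Σ_{i=0}^k i^{(p−1)} [f (y i) + ⟪∇f (y i), w − y i⟫] + (1/ε) D_h(w, x 0)`
satisfies `ψ_k (z k) ≥ C k^{(p)} f (y k)`. -/
theorem estimate_function_lower_bound
    {E : Type*} [NormedAddCommGroup E] [InnerProductSpace ℝ E] [CompleteSpace E]
    (p : ℕ) (hp : 2 ≤ p) (ε M C : ℝ) (hε : 0 < ε) (hM : 0 < M)
    (hC : 0 < C) (hC' : C ≤ M ^ (p - 1) / (p : ℝ) ^ p)
    (f h : E → ℝ) (hf : Differentiable ℝ f) (hh : Differentiable ℝ h)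
    (hfconv : ∀ a b : E, f a + ⟪gradient f a, b - a⟫ ≤ f b)
    (hhuc : ∀ a b : E, (1 / (p : ℝ)) * ‖b - a‖ ^ p ≤
      h b - h a - ⟪gradient h a, b - a⟫)
    (x y z : ℕ → E) (hz0 : z 0 = x 0)
    (hx : ∀ k : ℕ, x (k + 1) =
      ((p : ℝ) / ((k : ℝ) + (p : ℝ))) • z k + ((k : ℝ) / ((k : ℝ) + (p : ℝ))) • y k)
    (hz : ∀ k : ℕ, gradient h (z (k + 1)) = gradient h (z k)
      - (ε * C * (p : ℝ) * (risingFactorial (k + 1) (p - 1) : ℝ)) • gradient f (y (k + 1)))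
    (hy : ∀ k : ℕ, M * ε ^ (1 / ((p : ℝ) - 1)) *
        ‖gradient f (y k)‖ ^ ((p : ℝ) / ((p : ℝ) - 1))
      ≤ ⟪gradient f (y k), x k - y k⟫) :
    ∀ k : ℕ, C * (risingFactorial k p : ℝ) * f (y k) ≤
      C * (p : ℝ) * (∑ i ∈ Finset.range (k + 1), (risingFactorial i (p - 1) : ℝ) *
          (f (y i) + ⟪gradient f (y i), z k - y i⟫))
        + (1 / ε) * (h (z k) - h (x 0) - ⟪gradient h (x 0), z k - x 0⟫) :=
  estimate_function_lower_bound_general p hp ε M C hε hM hC hC' f h hfconv hhuc x y z hz0 hx hz hy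
end

section
/- Let E be a real inner product space, f : E → ℝ convex and differentiable, x* with f(x*) ≤ f(x) for all x, let r ≥ 3 be a real number and t₀ > 0. Suppose X, V, A : ℝ → E satisfy, for every t ≥ t₀: X has derivative V t at t, V has derivative A t at t, and A t + (r/t) • V t + ∇f(X t) = 0. Then for every t ≥ t₀: f(X t) − f(x*) ≤ (r−1)² E₀ / t², where E₀ = (1/2)‖X t₀ + (t₀/(r−1)) • V t₀ − x*‖² + (t₀²/(r−1)²)(f(X t₀) − f(x*)). -/
open Real
open scoped RealInnerProductSpace

/-!
Along a trajectory the energy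
`ℰ(s) = ½‖X s + (s/(r-1)) Ẋ s − x*‖² + (s²/(r-1)²)(f (X s) − f x*)`
is nonincreasing. Using the equation, its derivative is
`(s/(r-1)²) (2 (f (X s) − f x*) − (r-1) ⟪∇f (X s), X s − x*⟫)`, and convexity gives
`f (X s) − f x* ≤ ⟪∇f (X s), X s − x*⟫`, so the derivative is `≤ 0` as soon as `r - 1 ≥ 2`.
Dropping the nonnegative norm term, `(t²/(r-1)²)(f (X t) − f x*) ≤ ℰ(t) ≤ ℰ(t₀)`.
-/

open Set

section NesterovEnergy

variable {E : Type*} [NormedAddCommGroup E] [InnerProductSpace ℝ E]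

theorem HasGradientAt.comp_hasDerivAt [CompleteSpace E] {f : E → ℝ} {g : E} {X : ℝ → E}
    {v : E} {t : ℝ} (hf : HasGradientAt f g (X t)) (hX : HasDerivAt X v t) :
    HasDerivAt (fun s => f (X s)) ⟪g, v⟫ t := by
  simpa [Function.comp_def] using hf.hasFDerivAt.comp_hasDerivAt t hX

theorem hasDerivAt_add_div_smul_sub_of_damped_eq {X V : ℝ → E} {a G xstar : E} {r s : ℝ}
    (hX : HasDerivAt X (V s) s) (hV : HasDerivAt V a s) (hODE : a + (r / s) • V s + G = 0)
    (hs : s ≠ 0) (hr : r ≠ 1) :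
    HasDerivAt (fun u => X u + (u / (r - 1)) • V u - xstar) (-(s / (r - 1)) • G) s := by
  have hr' : r - 1 ≠ 0 := sub_ne_zero.2 hr
  have ha : a = -((r / s) • V s + G) := eq_neg_of_add_eq_zero_left (by rwa [← add_assoc])
  refine ((hX.add (((hasDerivAt_id s).div_const (r - 1)).smul hV)).sub_const xstar).congr_deriv ?_
  rw [ha, id_eq]
  -- the damping makes the coefficient `1 + 1/(r-1) - r/(r-1)` of `V s` vanish
  match_scalars
  · field_simp
    ring
  · field_simp

noncomputable def nesterovEnergy (f : E → ℝ) (xstar : E) (r : ℝ) (X V : ℝ → E) (s : ℝ) : ℝ :=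
  (1 / 2) * ‖X s + (s / (r - 1)) • V s - xstar‖ ^ 2
    + (s ^ 2 / (r - 1) ^ 2) * (f (X s) - f xstar)

theorem hasDerivAt_nesterovEnergy [CompleteSpace E] {f : E → ℝ} {xstar : E} {r s : ℝ}
    {X V A : ℝ → E} (hf : DifferentiableAt ℝ f (X s)) (hX : HasDerivAt X (V s) s)
    (hV : HasDerivAt V (A s) s) (hODE : A s + (r / s) • V s + gradient f (X s) = 0)
    (hs : s ≠ 0) (hr : r ≠ 1) :
    HasDerivAt (nesterovEnergy f xstar r X V)
      (s / (r - 1) ^ 2 * (2 * (f (X s) - f xstar)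
        - (r - 1) * ⟪gradient f (X s), X s - xstar⟫)) s := by
  have hr' : r - 1 ≠ 0 := sub_ne_zero.2 hr
  have hZ := hasDerivAt_add_div_smul_sub_of_damped_eq (xstar := xstar) hX hV hODE hs hr
  have hnorm := (hZ.norm_sq).const_mul (1 / 2 : ℝ)
  have hfX := (hf.hasGradientAt.comp_hasDerivAt hX).sub_const (f xstar)
  have hpow := (hasDerivAt_pow 2 s).div_const ((r - 1) ^ 2)
  refine (hnorm.add (hpow.mul hfX)).congr_deriv ?_
  simp only [real_inner_smul_right, inner_sub_left, inner_sub_right, inner_add_left,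
    real_inner_comm (gradient f (X s))]
  field_simp
  ring

theorem antitoneOn_nesterovEnergy [CompleteSpace E] {f : E → ℝ} (hf : Differentiable ℝ f)
    (hconv : ∀ a b : E, f a + ⟪gradient f a, b - a⟫ ≤ f b)
    {xstar : E} (hmin : ∀ a, f xstar ≤ f a) {r t₀ : ℝ} (hr : 3 ≤ r) (ht₀ : 0 < t₀)
    {X V A : ℝ → E} (hX : ∀ t ≥ t₀, HasDerivAt X (V t) t)
    (hV : ∀ t ≥ t₀, HasDerivAt V (A t) t)
    (hODE : ∀ t ≥ t₀, A t + (r / t) • V t + gradient f (X t) = 0) :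
    AntitoneOn (nesterovEnergy f xstar r X V) (Ici t₀) := by
  have hderiv : ∀ s ∈ Ici t₀, HasDerivAt (nesterovEnergy f xstar r X V)
      (s / (r - 1) ^ 2 * (2 * (f (X s) - f xstar)
        - (r - 1) * ⟪gradient f (X s), X s - xstar⟫)) s := fun s hs =>
    hasDerivAt_nesterovEnergy (hf _) (hX s hs) (hV s hs) (hODE s hs)
      (ht₀.trans_le hs).ne' (by linarith)
  refine antitoneOn_of_hasDerivWithinAt_nonpos (convex_Ici t₀)
    (fun s hs => (hderiv s hs).continuousAt.continuousWithinAt)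
    (fun s hs => (hderiv s (interior_subset hs)).hasDerivWithinAt) fun s hs => ?_
  rw [interior_Ici] at hs
  have hgap : 0 ≤ f (X s) - f xstar := sub_nonneg.2 (hmin _)
  have hfirst : f (X s) - f xstar ≤ ⟪gradient f (X s), X s - xstar⟫ := by
    have := hconv (X s) xstar
    rw [inner_sub_right] at this ⊢
    linarith
  have hdom : 2 * (f (X s) - f xstar) ≤ (r - 1) * ⟪gradient f (X s), X s - xstar⟫ :=
    calc 2 * (f (X s) - f xstar) ≤ (r - 1) * (f (X s) - f xstar) := by gcongr; linarith
      _ ≤ (r - 1) * ⟪gradient f (X s), X s - xstar⟫ := by gcongr; linarith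
  have hs0 : 0 ≤ s := ht₀.le.trans hs.le
  exact mul_nonpos_of_nonneg_of_nonpos (by positivity) (by linarith)

theorem sub_le_mul_nesterovEnergy_div {f : E → ℝ} {xstar : E} {r t : ℝ} {X V : ℝ → E}
    (hr : r ≠ 1) (ht : t ≠ 0) :
    f (X t) - f xstar ≤ (r - 1) ^ 2 * nesterovEnergy f xstar r X V t / t ^ 2 := by
  rw [le_div_iff₀ (by positivity)]
  calc (f (X t) - f xstar) * t ^ 2
        = (r - 1) ^ 2 * (t ^ 2 / (r - 1) ^ 2 * (f (X t) - f xstar)) := by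
        field_simp [sub_ne_zero.2 hr]
    _ ≤ (r - 1) ^ 2 * nesterovEnergy f xstar r X V t := by
        gcongr
        exact le_add_of_nonneg_left (by positivity)

end NesterovEnergy

/-- Convergence rate of the generalized damped equation
`Ẍ_t + (r/t) Ẋ_t + ∇f(X_t) = 0` for `r ≥ 3` (Appendix A.9 of the paper, answering
the question of Su–Boyd–Candès on the damping coefficient `3`):
`f (X t) − f x* ≤ (r−1)² E₀ / t²`, where
`E₀ = ½‖X t₀ + (t₀/(r−1)) Ẋ t₀ − x*‖² + (t₀²/(r−1)²)(f (X t₀) − f x*)`. -/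
theorem generalized_nesterov_ode_rate
    {E : Type*} [NormedAddCommGroup E] [InnerProductSpace ℝ E] [CompleteSpace E]
    (f : E → ℝ) (hf : Differentiable ℝ f)
    (hconv : ∀ a b : E, f a + ⟪gradient f a, b - a⟫ ≤ f b)
    (xstar : E) (hmin : ∀ a, f xstar ≤ f a)
    (r t₀ : ℝ) (hr : 3 ≤ r) (ht₀ : 0 < t₀)
    (X V A : ℝ → E)
    (hX : ∀ t ≥ t₀, HasDerivAt X (V t) t)
    (hV : ∀ t ≥ t₀, HasDerivAt V (A t) t)
    (hODE : ∀ t ≥ t₀, A t + (r / t) • V t + gradient f (X t) = 0) :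
    ∀ t ≥ t₀, f (X t) - f xstar ≤
      (r - 1) ^ 2 *
        ((1 / 2) * ‖X t₀ + (t₀ / (r - 1)) • V t₀ - xstar‖ ^ 2
          + (t₀ ^ 2 / (r - 1) ^ 2) * (f (X t₀) - f xstar)) / t ^ 2 := by
  intro t ht
  have hanti := antitoneOn_nesterovEnergy hf hconv hmin hr ht₀ hX hV hODE
  calc f (X t) - f xstar ≤ (r - 1) ^ 2 * nesterovEnergy f xstar r X V t / t ^ 2 :=
        sub_le_mul_nesterovEnergy_div (by linarith) (by linarith)
    _ ≤ (r - 1) ^ 2 * nesterovEnergy f xstar r X V t₀ / t ^ 2 := by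
        gcongr
        exact hanti self_mem_Ici ht ht
end
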